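/- arXiv:2408.10057 — 7 statements merged into one kernel-verified Lean document; each statement's English description precedes it below -/
import Mathlib

section
/- Let k be an algebraically closed field of characteristic zero and g a semisimple Lie algebra over k. If h is a Lie subalgebra of g whose only nilpotent element is 0, then h is abelian. -/
open LieAlgebra LieModule Module

/-- Pointwise nilpotency criterion for endomorphisms of a finite-dimensional space. -/
private lemma aux_isNilpotent_of_forall {k V : Type*} [Field k] [AddCommGroup V] [Module k V]
    [Module.Finite k V] (f : Module.End k V) (H : ∀ v : V, ∃ n, (f ^ n) v = 0) :
    IsNilpotent f :=
  ((LinearMap.charpoly_nilpotent_tfae f).out 0 2).mpr H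

private lemma aux_add {k V : Type*} [Field k] [AddCommGroup V] [Module k V]
    (F : Module.End k V) {v w : V} (hv : ∃ n, (F ^ n) v = 0) (hw : ∃ n, (F ^ n) w = 0) :
    ∃ n, (F ^ n) (v + w) = 0 := by
  obtain ⟨n, hn⟩ := hv
  obtain ⟨m, hm⟩ := hw
  refine ⟨n + m, ?_⟩
  have h1 : (F ^ (n + m)) v = 0 := by rw [add_comm, pow_add, Module.End.mul_apply, hn, map_zero]
  have h2 : (F ^ (n + m)) w = 0 := by rw [pow_add, Module.End.mul_apply, hm, map_zero]
  rw [map_add, h1, h2, add_zero]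

/-- An element of `h` lying in a generalized eigenspace of some `ad x` for a nonzero
eigenvalue is ad-nilpotent, hence zero. -/
private lemma aux_eig_zero
    (k : Type*) [Field k] [IsAlgClosed k] [CharZero k]
    (g : Type*) [LieRing g] [LieAlgebra k g] [Module.Finite k g]
    (h : LieSubalgebra k g)
    (hnil : ∀ x ∈ h, IsNilpotent (LieAlgebra.ad k g x) → x = 0)
    (x : g) {χ : k} (hχ : χ ≠ 0) {y : g} (hy : y ∈ h)
    (hyx : y ∈ (LieAlgebra.ad k g x).maxGenEigenspace χ) : y = 0 := by
  refine hnil y hy ?_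
  refine aux_isNilpotent_of_forall _ fun v => ?_
  have htop : v ∈ (⊤ : Submodule k g) := trivial
  rw [← Module.End.iSup_maxGenEigenspace_eq_top (ad k g x)] at htop
  refine Submodule.iSup_induction _ (motive := fun v => ∃ n, ((ad k g y) ^ n) v = 0) htop ?_
    ⟨0, by simp⟩ (fun v w hv hw => aux_add _ hv hw)
  intro μ v hv
  have hmem : ∀ n : ℕ, ((ad k g y) ^ n) v ∈
      (ad k g x).maxGenEigenspace ((n : k) * χ + μ) := by
    intro n
    induction n with
    | zero => simpa using hv
    | succ n ih =>
      have h2 := LieModule.lie_mem_maxGenEigenspace_toEnd (R := k) (L := g) (M := g)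
        (x := x) (χ₁ := χ) (χ₂ := (n : k) * χ + μ) hyx ih
      rw [pow_succ']
      have h3 : χ + ((n : k) * χ + μ) = ((n : k) + 1) * χ + μ := by ring
      rw [h3] at h2
      simpa [Module.End.mul_apply, LieAlgebra.ad] using h2
  have hfin : {μ' : k | (ad k g x).maxGenEigenspace μ' ≠ ⊥}.Finite :=
    WellFoundedGT.finite_ne_bot_of_iSupIndep ((ad k g x).independent_maxGenEigenspace)
  have hinj : Function.Injective fun n : ℕ => (n : k) * χ + μ := by
    intro a b hab
    simp only [add_left_inj] at hab
    have : (a : k) = b := mul_right_cancel₀ hχ hab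
    exact_mod_cast this
  obtain ⟨n, hn⟩ : ∃ n : ℕ, (ad k g x).maxGenEigenspace ((n : k) * χ + μ) = ⊥ := by
    by_contra hcon
    push_neg at hcon
    have hsub : Set.range (fun n : ℕ => (n : k) * χ + μ) ⊆
        {μ' : k | (ad k g x).maxGenEigenspace μ' ≠ ⊥} := by
      rintro - ⟨n, rfl⟩; exact hcon n
    exact Set.infinite_range_of_injective hinj (hfin.subset hsub)
  exact ⟨n, by simpa [hn] using hmem n⟩

/-- If `g` is a finite-dimensional semisimple Lie algebra over an algebraically closed field
of characteristic zero and `h` is a Lie subalgebra whose only nilpotent element (i.e. element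
`x` with `ad x` nilpotent) is `0`, then `h` is abelian. -/
theorem abelian_of_no_nilpotents
    (k : Type*) [Field k] [IsAlgClosed k] [CharZero k]
    (g : Type*) [LieRing g] [LieAlgebra k g] [Module.Finite k g]
    [LieAlgebra.IsSemisimple k g]
    (h : LieSubalgebra k g)
    (hnil : ∀ x ∈ h, IsNilpotent (LieAlgebra.ad k g x) → x = 0) :
    IsLieAbelian h := by
  -- Step 1: `h` is a nilpotent Lie algebra.
  have hinv : ∀ x : h, ∀ v ∈ h.toSubmodule, (ad k g (x : g)) v ∈ h.toSubmodule :=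
    fun x v hv => h.lie_mem x.2 hv
  haveI : LieRing.IsNilpotent h := by
    rw [LieAlgebra.isNilpotent_iff_forall (R := k) (L := h)]
    intro x
    set f := ad k g (x : g) with hf
    set f' := f.restrict (hinv x) with hf'
    have htop : ⨆ μ, Module.End.genEigenspace f' μ ⊤ = ⊤ := by
      refine Module.End.genEigenspace_restrict_eq_top (hinv x) ?_
      simpa [Module.End.maxGenEigenspace] using Module.End.iSup_maxGenEigenspace_eq_top f
    have hbot : ∀ μ : k, μ ≠ 0 → Module.End.genEigenspace f' μ ⊤ = ⊥ := by
      intro μ hμ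
      rw [eq_bot_iff]
      intro w hw
      rw [Module.End.genEigenspace_restrict] at hw
      have : (w : g) = 0 := aux_eig_zero k g h hnil (x : g) hμ w.2 hw
      simpa [Submodule.mem_bot] using Subtype.ext this
    have h0 : Module.End.genEigenspace f' 0 ⊤ = ⊤ := by
      rw [← htop]
      refine le_antisymm (le_iSup (fun μ => Module.End.genEigenspace f' μ ⊤) 0)
        (iSup_le fun μ => ?_)
      by_cases hμ : μ = 0
      · subst hμ; exact le_rfl
      · rw [hbot μ hμ]; exact bot_le
    have hnilf' : IsNilpotent f' := by
      refine aux_isNilpotent_of_forall _ fun w => ?_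
      have : w ∈ Module.End.genEigenspace f' 0 ⊤ := h0 ▸ trivial
      rw [Module.End.mem_genEigenspace] at this
      obtain ⟨n, -, hn⟩ := this
      exact ⟨n, by simpa using hn⟩
    obtain ⟨n, hn⟩ := hnilf'
    refine ⟨n, ?_⟩
    ext w
    show ((((ad k h x) ^ n) w : h) : g) = ((0 : Module.End k h) w : g)
    rw [LieSubalgebra.coe_ad_pow]
    have hres := congrArg (fun φ => ((φ ⟨(w : g), w.2⟩ : h.toSubmodule) : g)) hn
    rw [hf', Module.End.pow_restrict] at hres
    simpa [LinearMap.restrict_apply] using hres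
  -- Step 2: use the weight space decomposition of `g` under `h`.
  constructor
  intro x y
  have key : ((⁅x, y⁆ : h) : g) = 0 := by
    set z : h := ⁅x, y⁆ with hz
    refine hnil (z : g) z.2 ?_
    refine aux_isNilpotent_of_forall _ fun v => ?_
    have htop : v ∈ (⊤ : Submodule k g) := trivial
    rw [← LieSubmodule.top_toSubmodule (R := k) (L := h) (M := g),
      ← LieModule.iSup_genWeightSpace_eq_top k h g,
      LieSubmodule.iSup_toSubmodule] at htop
    refine Submodule.iSup_induction _ (motive := fun v => ∃ n, ((ad k g (z : g)) ^ n) v = 0) htop ?_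
      ⟨0, by simp⟩ (fun v w hv hw => aux_add _ hv hw)
    intro χ v hv
    by_cases hbot : genWeightSpace g χ = ⊥
    · have : v = 0 := by simpa [hbot] using hv
      exact ⟨1, by simp [this]⟩
    · have hχz : χ (z : h) = 0 := LinearWeights.map_lie χ hbot x y
      have hnz : IsNilpotent (toEnd k h (genWeightSpace g χ) z) := by
        have := LieModule.isNilpotent_toEnd_sub_algebraMap g χ (z : h)
        rwa [hχz, map_zero, sub_zero] at this
      obtain ⟨n, hn⟩ := hnz
      refine ⟨n, ?_⟩
      have hcoe := LieSubmodule.coe_toEnd_pow k h g (genWeightSpace g χ) z ⟨v, hv⟩ n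
      rw [hn] at hcoe
      simpa [LieAlgebra.ad, LieSubalgebra.toEnd_eq] using hcoe.symm
  exact Subtype.ext key
end

section
/- Let h be the 2-dimensional Lie algebra with basis {h0,e}, [h0,e]=2e, and M a finite-dimensional h-module on which h0 acts diagonalizably with integer eigenvalues, such that e: M_0 → M_2 is surjective (M_i denoting h0-eigenspaces). Then every 1-cocycle φ ∈ Z^1(h, M) (i.e. φ([x,y]) = x·φ(y) − y·φ(x)) is cohomologous to a cocycle ψ with ψ(e) = 0 and ψ(h0) ∈ M^h (the h-invariants). Consequently H^1(h,M) ≅ M^h via the map sending x ∈ M^h to the class of the cocycle δ_x with δ_x(e)=0, δ_x(h0)=x. -/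
open LieModule Module

/-- Let `L` be the 2-dimensional Lie algebra with basis `{h0, e}` and `[h0, e] = 2 e`, and
`M` a finite-dimensional `L`-module on which `h0` acts diagonally with integer eigenvalues
and such that `e : M_0 → M_2` is surjective.  Then every 1-cocycle `φ : L → M` is
cohomologous to a cocycle `ψ` with `ψ e = 0` and `ψ h0 ∈ M^L`; i.e. `φ = δ_x + dm` with
`x ∈ M^L`.  Moreover the resulting map `M^L → H¹(L, M)`, `x ↦ [δ_x]`, is injective, so that
`H¹(L, M) ≅ M^L`. -/
theorem H1_of_two_dim_nonabelian
    (k : Type*) [Field k] [CharZero k]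
    (L : Type*) [LieRing L] [LieAlgebra k L]
    (M : Type*) [AddCommGroup M] [Module k M] [LieRingModule L M] [LieModule k L M]
    [Module.Finite k M]
    (h0 e : L)
    (hindep : LinearIndependent k ![h0, e])
    (hspan : Submodule.span k {h0, e} = (⊤ : Submodule k L))
    (hbr : ⁅h0, e⁆ = (2 : k) • e)
    (Meig : ℤ → Submodule k M)
    (hMeig : ∀ i : ℤ, Meig i = Module.End.eigenspace (LieModule.toEnd k L M h0) (i : k))
    (hdiag : (⨆ i : ℤ, Meig i) = ⊤)
    (hsurj : ∀ m ∈ Meig 2, ∃ m0 ∈ Meig 0, ⁅e, m0⁆ = m) :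
    -- every cocycle is `δ_x + dm` for some invariant `x`
    (∀ φ : L →ₗ[k] M, (∀ x y : L, φ ⁅x, y⁆ = ⁅x, φ y⁆ - ⁅y, φ x⁆) →
      ∃ (x : M) (m : M), ⁅e, x⁆ = 0 ∧ ⁅h0, x⁆ = 0 ∧
        φ e = ⁅e, m⁆ ∧ φ h0 = x + ⁅h0, m⁆) ∧
    -- and `δ_x` is a coboundary only for `x = 0`
    (∀ (x : M), ⁅e, x⁆ = 0 → ⁅h0, x⁆ = 0 →
      (∃ m : M, (0 : M) = ⁅e, m⁆ ∧ x = ⁅h0, m⁆) → x = 0) := by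
  classical
  -- membership in eigenspaces
  have hmem : ∀ (i : ℤ) (m : M), m ∈ Meig i ↔ ⁅h0, m⁆ = (i : k) • m := by
    intro i m
    rw [hMeig i, Module.End.mem_eigenspace_iff, LieModule.toEnd_apply_apply]
  -- bracket with a finite sum
  have hliesum : ∀ (z : L) (s : Finset ℤ) (t : ℤ → M),
      ⁅z, ∑ i ∈ s, t i⁆ = ∑ i ∈ s, ⁅z, t i⁆ := by
    intro z s t
    induction s using Finset.induction with
    | empty => simp
    | insert a s h ih => rw [Finset.sum_insert h, Finset.sum_insert h, lie_add, ih]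
  -- the commutation relation on M
  have hcomm : ∀ m : M, ⁅h0, ⁅e, m⁆⁆ = ⁅e, ⁅h0, m⁆⁆ + (2 : k) • ⁅e, m⁆ := by
    intro m
    have h1 : ⁅⁅h0, e⁆, m⁆ = ⁅h0, ⁅e, m⁆⁆ - ⁅e, ⁅h0, m⁆⁆ := lie_lie h0 e m
    rw [hbr, smul_lie, eq_sub_iff_add_eq] at h1
    rw [← h1]; abel
  -- e maps Meig i to Meig (i+2)
  have hEmap : ∀ (i : ℤ) (m : M), m ∈ Meig i → ⁅e, m⁆ ∈ Meig (i + 2) := by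
    intro i m hm
    rw [hmem] at hm ⊢
    rw [hcomm, hm, lie_smul]
    push_cast
    module
  -- the eigenspaces are independent
  have hind : iSupIndep Meig := by
    have h1 : iSupIndep (Module.End.eigenspace (LieModule.toEnd k L M h0)) :=
      Module.End.eigenspaces_iSupIndep _
    have hinj : Function.Injective (fun i : ℤ => (i : k)) := fun a b hab => by
      simpa using hab
    have h2 := h1.comp hinj
    have : Meig = (Module.End.eigenspace (LieModule.toEnd k L M h0)) ∘ (fun i : ℤ => (i : k)) :=
      funext hMeig
    rw [this]
    exact h2
  have hint : DirectSum.IsInternal Meig :=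
    DirectSum.isInternal_submodule_of_iSupIndep_of_iSup_eq_top hind hdiag
  letI : DirectSum.Decomposition Meig := hint.chooseDecomposition
  -- projections
  set p : ℤ → M → M := fun i m => ((DirectSum.decompose Meig m) i : M) with hp
  have hpmem : ∀ (i : ℤ) (m : M), p i m ∈ Meig i := fun i m => Subtype.coe_prop _
  have hpsame : ∀ {i : ℤ} {m : M}, m ∈ Meig i → p i m = m := fun h =>
    DirectSum.decompose_of_mem_same Meig h
  have hpne : ∀ {i j : ℤ} {m : M}, m ∈ Meig i → i ≠ j → p j m = 0 := fun h hij =>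
    DirectSum.decompose_of_mem_ne Meig h hij
  have hpsupp : ∀ (j : ℤ) (m : M), j ∉ (DirectSum.decompose Meig m).support → p j m = 0 := by
    intro j m hj
    rw [DFinsupp.notMem_support_iff] at hj
    simp only [hp, hj, ZeroMemClass.coe_zero]
  have hpsum : ∀ m : M, ∑ i ∈ (DirectSum.decompose Meig m).support, p i m = m := fun m =>
    DirectSum.sum_support_decompose Meig m
  -- p is linear
  have hPdef : ∀ j : ℤ, ∃ P : M →ₗ[k] M, ∀ m : M, P m = p j m := by
    intro j
    exact ⟨(Meig j).subtype ∘ₗ (DirectSum.component k ℤ (fun i => ↥(Meig i)) j) ∘ₗ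
      (DirectSum.decomposeLinearEquiv Meig).toLinearMap, fun m => rfl⟩
  have hpsub : ∀ (j : ℤ) (u v : M), p j (u - v) = p j u - p j v := by
    intro j u v
    obtain ⟨P, hP⟩ := hPdef j
    rw [← hP, ← hP, ← hP, map_sub]
  have hpsmul : ∀ (j : ℤ) (c : k) (v : M), p j (c • v) = c • p j v := by
    intro j c v
    obtain ⟨P, hP⟩ := hPdef j
    rw [← hP, ← hP, map_smul]
  have hpaddsum : ∀ (j : ℤ) (s : Finset ℤ) (t : ℤ → M),
      p j (∑ i ∈ s, t i) = ∑ i ∈ s, p j (t i) := by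
    intro j s t
    obtain ⟨P, hP⟩ := hPdef j
    simp only [← hP, map_sum]
  -- projection of a sum of eigenvectors
  have hpsumop : ∀ (s : Finset ℤ) (t : ℤ → M), (∀ i ∈ s, t i ∈ Meig i) → ∀ j : ℤ,
      p j (∑ i ∈ s, t i) = if j ∈ s then t j else 0 := by
    intro s t ht j
    rw [hpaddsum]
    have hcong : ∀ i ∈ s, p j (t i) = if i = j then t i else 0 := by
      intro i hi
      by_cases hij : i = j
      · subst hij; rw [if_pos rfl]; exact hpsame (ht i hi)
      · rw [if_neg hij]; exact hpne (ht i hi) hij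
    rw [Finset.sum_congr rfl hcong, Finset.sum_ite_eq' s j t]
  -- projection versus the action of h0
  have hpH : ∀ (j : ℤ) (m : M), p j ⁅h0, m⁆ = (j : k) • p j m := by
    intro j m
    have hm : ⁅h0, m⁆ = ∑ i ∈ (DirectSum.decompose Meig m).support, (i : k) • p i m := by
      conv_lhs => rw [← hpsum m]
      rw [hliesum]
      exact Finset.sum_congr rfl fun i _ => (hmem i _).1 (hpmem i m)
    rw [hm, hpsumop _ _ (fun i _ => Submodule.smul_mem _ _ (hpmem i m)) j]
    by_cases hj : j ∈ (DirectSum.decompose Meig m).support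
    · rw [if_pos hj]
    · rw [if_neg hj, hpsupp j m hj, smul_zero]
  -- projection versus the action of e
  have hpE : ∀ (j : ℤ) (m : M), p j ⁅e, m⁆ = ⁅e, p (j - 2) m⁆ := by
    intro j m
    set s := (DirectSum.decompose Meig m).support with hs
    have hm : ⁅e, m⁆ = ∑ i ∈ s.image (· + 2), ⁅e, p (i - 2) m⁆ := by
      conv_lhs => rw [← hpsum m]
      rw [hliesum, Finset.sum_image (fun a _ b _ h => by omega)]
      exact Finset.sum_congr rfl fun i _ => by rw [add_sub_cancel_right]
    have hmm : ∀ i ∈ s.image (· + 2), ⁅e, p (i - 2) m⁆ ∈ Meig i := by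
      intro i _
      have h9 := hEmap (i - 2) (p (i - 2) m) (hpmem (i - 2) m)
      rwa [sub_add_cancel] at h9
    rw [hm, hpsumop _ _ hmm j]
    by_cases hj : j ∈ s.image (· + 2)
    · rw [if_pos hj]
    · rw [if_neg hj]
      have hns : j - 2 ∉ s := by
        intro hc
        exact hj (Finset.mem_image.2 ⟨j - 2, hc, by omega⟩)
      rw [hpsupp _ _ hns, lie_zero]
  constructor
  · -- every cocycle is δ_x + dm
    intro φ hφ
    set a := φ e with ha
    set b := φ h0 with hb
    have hcoc : ⁅e, b⁆ = ⁅h0, a⁆ - (2 : k) • a := by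
      have h1 := hφ h0 e
      rw [hbr, map_smul] at h1
      rw [eq_sub_iff_add_eq] at h1 ⊢
      rw [add_comm]
      exact h1
    -- key: projections of a in terms of projections of b
    have hkey : ∀ j : ℤ, ((j : k) - 2) • p j a = ⁅e, p (j - 2) b⁆ := by
      intro j
      have h1 : p j ⁅e, b⁆ = ⁅e, p (j - 2) b⁆ := hpE j b
      rw [hcoc] at h1
      rw [hpsub, hpH, hpsmul, ← sub_smul] at h1
      exact h1
    set S := (DirectSum.decompose Meig b).support with hS
    obtain ⟨m0, hm0mem, hm0⟩ := hsurj (p 2 a) (hpmem 2 a)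
    set m : M := m0 + ∑ j ∈ S.erase 0, ((j : k)⁻¹) • p j b with hm
    -- ⁅e, m⁆ = a
    have hEterm : ∀ j ∈ S.erase 0, ⁅e, ((j : k)⁻¹) • p j b⁆ = p (j + 2) a := by
      intro j hj
      have hj0 : (j : ℤ) ≠ 0 := Finset.ne_of_mem_erase hj
      have hjk : (j : k) ≠ 0 := Int.cast_ne_zero.2 hj0
      have hkj := hkey (j + 2)
      have hc1 : (j : ℤ) + 2 - 2 = j := by ring
      have hc2 : (((j : ℤ) + 2 : ℤ) : k) - 2 = (j : k) := by push_cast; ring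
      rw [hc1, hc2] at hkj
      rw [lie_smul, ← hkj, smul_smul, inv_mul_cancel₀ hjk, one_smul]
    have hEm : ⁅e, m⁆ = a := by
      have h1 : ⁅e, m⁆ = p 2 a + ∑ j ∈ S.erase 0, p (j + 2) a := by
        rw [hm, lie_add, hm0]
        congr 1
        rw [hliesum]
        exact Finset.sum_congr rfl hEterm
      have h2 : ∑ j ∈ S.erase 0, p (j + 2) a = ∑ i ∈ (S.erase 0).image (· + 2), p i a := by
        rw [Finset.sum_image (fun x _ y _ h => by omega)]
      have h2' : (2 : ℤ) ∉ (S.erase 0).image (· + 2) := by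
        intro hc
        obtain ⟨j, hj, hj2⟩ := Finset.mem_image.1 hc
        have hj0 : j = 0 := by omega
        exact Finset.ne_of_mem_erase hj hj0
      have h3 : ⁅e, m⁆ = ∑ i ∈ insert 2 ((S.erase 0).image (· + 2)), p i a := by
        rw [Finset.sum_insert h2', h1, h2]
      -- supp a ⊆ insert 2 (...)
      have hsub2 : (DirectSum.decompose Meig a).support
          ⊆ insert 2 ((S.erase 0).image (· + 2)) := by
        intro i hi
        by_cases hi2 : i = 2
        · subst hi2; exact Finset.mem_insert_self _ _
        · refine Finset.mem_insert_of_mem (Finset.mem_image.2 ⟨i - 2, ?_, by omega⟩)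
          refine Finset.mem_erase.2 ⟨by omega, ?_⟩
          by_contra hc
          have hz : p (i - 2) b = 0 := hpsupp _ _ hc
          have hki := hkey i
          rw [hz, lie_zero] at hki
          have hne : ((i : k) - 2) ≠ 0 := by
            intro hc2
            apply hi2
            have hik : (i : k) = ((2 : ℤ) : k) := by
              have := sub_eq_zero.1 hc2
              push_cast
              exact this
            exact Int.cast_injective hik
          have hpz : p i a = 0 := (smul_eq_zero.1 hki).resolve_left hne
          rw [DFinsupp.mem_support_iff] at hi
          apply hi
          ext
          simpa [hp] using hpz
      have h4 : ∑ i ∈ insert 2 ((S.erase 0).image (· + 2)), p i a = a := by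
        conv_rhs => rw [← hpsum a]
        symm
        apply Finset.sum_subset hsub2
        intro i _ hi
        exact hpsupp _ _ hi
      rw [h3, h4]
    -- ⁅h0, m⁆ = ∑_{j ∈ S.erase 0} p j b
    have hHm : ⁅h0, m⁆ = ∑ j ∈ S.erase 0, p j b := by
      rw [hm, lie_add]
      have hm00 : ⁅h0, m0⁆ = 0 := by
        have h9 := (hmem 0 m0).1 hm0mem
        simpa using h9
      rw [hm00, zero_add, hliesum]
      refine Finset.sum_congr rfl fun j hj => ?_
      have hj0 : (j : ℤ) ≠ 0 := Finset.ne_of_mem_erase hj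
      have hjk : (j : k) ≠ 0 := Int.cast_ne_zero.2 hj0
      rw [lie_smul, (hmem j _).1 (hpmem j b), smul_smul, inv_mul_cancel₀ hjk, one_smul]
    have hb' : b = p 0 b + ∑ j ∈ S.erase 0, p j b := by
      have hbsum : ∑ j ∈ insert 0 S, p j b = b := by
        conv_rhs => rw [← hpsum b]
        symm
        apply Finset.sum_subset (Finset.subset_insert 0 S)
        intro i _ hi
        exact hpsupp _ _ hi
      have h6 : ∑ j ∈ insert 0 S, p j b = p 0 b + ∑ j ∈ (insert 0 S).erase 0, p j b :=
        (Finset.add_sum_erase _ _ (Finset.mem_insert_self 0 S)).symm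
      rw [Finset.erase_insert_eq_erase] at h6
      conv_lhs => rw [← hbsum, h6]
    -- the invariant part
    refine ⟨p 0 b, m, ?_, ?_, hEm.symm, ?_⟩
    · -- ⁅e, p 0 b⁆ = 0
      have hxb : p 0 b = b - ⁅h0, m⁆ := by
        rw [hHm, eq_sub_iff_add_eq]
        exact hb'.symm
      rw [hxb, lie_sub]
      have h5 : ⁅e, ⁅h0, m⁆⁆ = ⁅h0, ⁅e, m⁆⁆ - (2 : k) • ⁅e, m⁆ := by
        rw [hcomm m]; abel
      rw [h5, hEm, hcoc]
      abel
    · -- ⁅h0, p 0 b⁆ = 0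
      have h9 := (hmem 0 (p 0 b)).1 (hpmem 0 b)
      simpa using h9
    · -- b = p 0 b + ⁅h0, m⁆
      rw [hHm]
      exact hb'
  · -- injectivity
    rintro x hex hhx ⟨m, hm1, hm2⟩
    have hx0 : x ∈ Meig 0 := (hmem 0 x).2 (by simpa using hhx)
    -- all nonzero components of m vanish
    have hmz : ∀ j : ℤ, j ≠ 0 → p j m = 0 := by
      intro j hj
      have h1 : p j x = (j : k) • p j m := by rw [hm2, hpH]
      have h2 : p j x = 0 := hpne hx0 (Ne.symm hj)
      have hjk : (j : k) ≠ 0 := Int.cast_ne_zero.2 hj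
      rw [h2] at h1
      exact (smul_eq_zero.1 h1.symm).resolve_left hjk
    have hm0 : m ∈ Meig 0 := by
      rw [← hpsum m]
      refine Submodule.sum_mem _ fun j hj => ?_
      by_cases hj0 : j = 0
      · subst hj0; exact hpmem 0 m
      · rw [hmz j hj0]; exact Submodule.zero_mem _
    have hzz : ⁅h0, m⁆ = 0 := by
      have h9 := (hmem 0 m).1 hm0
      simpa using h9
    rw [hm2, hzz]
end

section
/- Let A be a Noetherian ring, F a finitely generated projective A-module, and M ⊆ F a submodule. Then the strong saturation of M in F equals the intersection of the kernels of all A-linear functionals λ: F → A vanishing on M, and the saturation of M in F equals {x ∈ F : ax ∈ M for some regular element a ∈ A}. -/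
variable {A : Type*} [CommRing A] {F : Type*} [AddCommGroup F] [Module A F]

/-- The strong saturation of a submodule `M ⊆ F`: the kernel of
`F → (F/M) → (F/M)^∨∨`, i.e. of `F → (F/M)_tol`. -/
noncomputable def Submodule.strongSaturation (M : Submodule A F) : Submodule A F :=
  LinearMap.ker ((Module.Dual.eval A (F ⧸ M)).comp M.mkQ)

/-- The saturation of a submodule `M ⊆ F`: the kernel of
`F → (F/M) → K ⊗ (F/M)`, i.e. of `F → (F/M)_tof`, where `K` is the total ring of
fractions. -/
noncomputable def Submodule.saturation' (M : Submodule A F) : Submodule A F :=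
  LinearMap.ker ((LocalizedModule.mkLinearMap (nonZeroDivisors A) (F ⧸ M)).comp M.mkQ)

/-- For a Noetherian ring `A`, a finitely generated projective module `F` and a submodule
`M ⊆ F`: the strong saturation of `M` in `F` is the intersection of the kernels of all
functionals `F → A` vanishing on `M`, and the saturation of `M` in `F` is the set of `x ∈ F`
such that `a • x ∈ M` for some regular element `a ∈ A`. -/
theorem strongSaturation_eq_iInf_ker_and_saturation_eq
    [IsNoetherianRing A] [Module.Finite A F] [Module.Projective A F]
    (M : Submodule A F) :
    (M.strongSaturation =
        ⨅ l : {l : F →ₗ[A] A // ∀ m ∈ M, l m = 0}, LinearMap.ker l.1) ∧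
    ((M.saturation' : Set F) = {x : F | ∃ a ∈ nonZeroDivisors A, a • x ∈ M}) := by
  constructor
  · ext x
    simp only [Submodule.strongSaturation, LinearMap.mem_ker, LinearMap.comp_apply,
      Submodule.mem_iInf]
    constructor
    · rintro h ⟨l, hl⟩
      have hM : M ≤ LinearMap.ker l := fun m hm => hl m hm
      have := LinearMap.ext_iff.mp h (M.liftQ l hM)
      simpa [Module.Dual.eval] using this
    · intro h
      ext φ
      have := h ⟨φ.comp M.mkQ, fun m hm => by
        simp [LinearMap.comp_apply, (Submodule.Quotient.mk_eq_zero M).mpr hm]⟩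
      simpa [Module.Dual.eval] using this
  · ext x
    simp only [SetLike.mem_coe, Submodule.saturation', LinearMap.mem_ker,
      LinearMap.comp_apply, LocalizedModule.mkLinearMap_apply, Set.mem_setOf_eq]
    rw [← LocalizedModule.zero_mk (1 : nonZeroDivisors A), LocalizedModule.mk_eq]
    constructor
    · rintro ⟨u, hu⟩
      refine ⟨u, u.2, ?_⟩
      rw [← Submodule.Quotient.mk_eq_zero M]
      simpa [Submodule.Quotient.mk_smul, Submonoid.smul_def] using hu
    · rintro ⟨a, ha, hax⟩
      refine ⟨⟨a, ha⟩, ?_⟩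
      have : a • M.mkQ x = 0 := by
        rw [Submodule.mkQ_apply, ← Submodule.Quotient.mk_smul, Submodule.Quotient.mk_eq_zero]
        exact hax
      simpa using this
end

section
/- Let A be a Noetherian ring, F a finitely generated projective A-module with canonical pairing ⟨-,-⟩ : F × F^∨ → A, and M ⊆ F a submodule. Define M^⊥ = {θ ∈ F^∨ : ⟨m,θ⟩ = 0 for all m ∈ M}. Then: (1) (M^ssat)^⊥ = (M^sat)^⊥ = M^⊥; (2) M^⊥ is strongly saturated in F^∨; (3) the natural map M → M^⊥⊥ is an isomorphism if and only if M is strongly saturated in F; (4) M^⊥⊥ = M^ssat. -/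
variable {A : Type*} [CommRing A] {F : Type*} [AddCommGroup F] [Module A F]

/-- Key identity: the strong saturation is exactly the double orthogonal. -/
theorem Submodule.strongSaturation_eq_dualCoannihilator (M : Submodule A F) :
    M.strongSaturation = M.dualAnnihilator.dualCoannihilator := by
  ext x
  simp only [strongSaturation, LinearMap.mem_ker, LinearMap.comp_apply,
    mem_dualCoannihilator, mem_dualAnnihilator]
  constructor
  · intro h ψ hψ
    have : ψ = (M.liftQ ψ (fun m hm => hψ m hm)).comp M.mkQ := by
      ext y; simp; rfl
    rw [this]
    have := DFunLike.congr_fun h (M.liftQ ψ (fun m hm => hψ m hm))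
    simpa using this
  · intro h
    ext φ
    simpa using h (φ.comp M.mkQ) (fun m hm => by simp [Submodule.Quotient.mk_eq_zero M |>.2 hm])

theorem Submodule.le_strongSaturation (M : Submodule A F) : M ≤ M.strongSaturation := by
  rw [strongSaturation_eq_dualCoannihilator]
  exact le_dualAnnihilator_dualCoannihilator M

/-- `M^⊥` is strongly saturated. -/
theorem Submodule.strongSaturation_dualAnnihilator (M : Submodule A F) :
    M.dualAnnihilator.strongSaturation = M.dualAnnihilator := by
  rw [strongSaturation_eq_dualCoannihilator]
  refine le_antisymm ?_ (le_dualAnnihilator_dualCoannihilator _)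
  intro φ hφ
  rw [mem_dualCoannihilator] at hφ
  rw [mem_dualAnnihilator]
  intro m hm
  exact hφ (Module.Dual.eval A F m)
    ((mem_dualAnnihilator _).2 fun ψ hψ => (mem_dualAnnihilator ψ).1 hψ m hm)

theorem Submodule.le_saturation' (M : Submodule A F) : M ≤ M.saturation' := by
  intro m hm
  simp [saturation', LinearMap.mem_ker, Submodule.Quotient.mk_eq_zero M |>.2 hm]

theorem Submodule.saturation'_le_strongSaturation (M : Submodule A F) :
    M.saturation' ≤ M.strongSaturation := by
  intro x hx
  rw [strongSaturation_eq_dualCoannihilator, mem_dualCoannihilator]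
  intro φ hφ
  rw [mem_dualAnnihilator] at hφ
  simp only [saturation', LinearMap.mem_ker, LinearMap.comp_apply] at hx
  have hx' : LocalizedModule.mk (M.mkQ x) (1 : nonZeroDivisors A) =
      LocalizedModule.mk (0 : F ⧸ M) 1 := by
    rw [LocalizedModule.zero_mk]
    simpa [LocalizedModule.mkLinearMap_apply] using hx
  obtain ⟨⟨s, hs⟩, hu⟩ := LocalizedModule.mk_eq.mp hx'
  have h : s • M.mkQ x = 0 := by simpa using hu
  have hφ' : φ = (M.liftQ φ (fun m hm => hφ m hm)).comp M.mkQ := by ext y; simp; rfl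
  have : s * φ x = 0 := by
    rw [hφ']
    have := congrArg (M.liftQ φ (fun m hm => hφ m hm)) h
    simpa [smul_eq_mul] using this
  exact (mul_right_mem_nonZeroDivisors_eq_zero_iff hs).mp (by rwa [mul_comm])

/-- Let `A` be Noetherian, `F` finitely generated projective and `M ⊆ F` a submodule; write
`M^⊥ ⊆ F^∨` for the annihilator of `M` and `M^⊥⊥ ⊆ F` for the coannihilator of `M^⊥`
(i.e. `M^⊥⊥` viewed inside `F ≅ F^∨∨`).  Then:
(1) `(M^ssat)^⊥ = (M^sat)^⊥ = M^⊥`;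
(2) `M^⊥` is strongly saturated in `F^∨`;
(3) `M = M^⊥⊥` if and only if `M` is strongly saturated in `F`;
(4) `M^⊥⊥ = M^ssat`. -/
theorem orthogonal_properties
    [IsNoetherianRing A] [Module.Finite A F] [Module.Projective A F]
    (M : Submodule A F) :
    (M.strongSaturation.dualAnnihilator = M.dualAnnihilator ∧
      M.saturation'.dualAnnihilator = M.dualAnnihilator) ∧
    (M.dualAnnihilator.strongSaturation = M.dualAnnihilator) ∧
    (M.dualAnnihilator.dualCoannihilator = M ↔ M.strongSaturation = M) ∧
    (M.dualAnnihilator.dualCoannihilator = M.strongSaturation) := by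
  have key := M.strongSaturation_eq_dualCoannihilator
  have h1 : M.strongSaturation.dualAnnihilator = M.dualAnnihilator := by
    rw [key, Submodule.dualAnnihilator_dualCoannihilator_dualAnnihilator]
  refine ⟨⟨h1, ?_⟩, M.strongSaturation_dualAnnihilator, ?_, key.symm⟩
  · exact le_antisymm
      (Submodule.dualAnnihilator_anti M.le_saturation')
      (h1 ▸ Submodule.dualAnnihilator_anti M.saturation'_le_strongSaturation)
  · rw [← key]
end

section
/- Let X be an integral locally factorial Noetherian scheme (or a smooth variety), and let V, W be saturated coherent subsheaves of the tangent sheaf T (i.e. with torsion-free quotients) with W ⊆ V, such that the generic rank of T/V is q and of T/W is q+1. Then every point x where the stalk W_x and (T/W)_x are both free (a regular point of W) is a point where V_x is a free O_{X,x}-module. In the local algebra formulation: let R be a local Noetherian factorial ring, T a finite free R-module, W ⊆ V ⊆ T submodules with T/V and T/W torsion-free; if W and T/W are free and rank(V/W) = 1, then V is a free R-module. -/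
open Module

/-- In a GCD monoid, every list has a "gcd" `g` dividing all entries such that whenever
`a ∣ b * x` for all entries `x`, also `a ∣ b * g`. -/
private lemma exists_gcd_list {R : Type*} [CommMonoidWithZero R] [GCDMonoid R] :
    ∀ l : List R, ∃ g : R, (∀ x ∈ l, g ∣ x) ∧ (∀ a b : R, (∀ x ∈ l, a ∣ b * x) → a ∣ b * g)
  | [] => ⟨0, by simp, fun a b _ => by simp⟩
  | x :: l => by
    obtain ⟨g, hg1, hg2⟩ := exists_gcd_list l
    refine ⟨gcd x g, ?_, ?_⟩
    · intro y hy
      rcases List.mem_cons.mp hy with rfl | hy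
      · exact gcd_dvd_left _ _
      · exact (gcd_dvd_right x g).trans (hg1 y hy)
    · intro a b h
      have h1 : a ∣ b * x := h x (List.mem_cons_self (a := x) (l := l))
      have h2 : a ∣ b * g := hg2 a b fun y hy => h y (List.mem_cons_of_mem _ hy)
      exact (dvd_gcd h1 h2).trans (gcd_mul_left' b x g).dvd

/-- Over a UFD, a rank-one submodule of a finite free module with torsion-free quotient
is free (it is generated by a primitive vector). -/
private lemma free_of_rank_one_saturated
    {R : Type*} [CommRing R] [IsDomain R] [UniqueFactorizationMonoid R]
    {F : Type*} [AddCommGroup F] [Module R F] [Module.Free R F] [Module.Finite R F]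
    (M : Submodule R F) (hsat : NoZeroSMulDivisors R (F ⧸ M))
    (h1 : Module.rank R M = 1) : Module.Free R M := by
  letI : GCDMonoid R := UniqueFactorizationMonoid.toGCDMonoid R
  let b := Module.Free.chooseBasis R F
  -- saturation
  have hsat' : ∀ (r : R) (x : F), r ≠ 0 → r • x ∈ M → x ∈ M := by
    intro r x hr hrx
    have h0 : r • (Submodule.Quotient.mk x : F ⧸ M) = 0 := by
      rw [← Submodule.Quotient.mk_smul, Submodule.Quotient.mk_eq_zero]
      exact hrx
    rcases smul_eq_zero.mp h0 with h | h
    · exact absurd h hr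
    · exact (Submodule.Quotient.mk_eq_zero M).mp h
  -- a nonzero element of M
  obtain ⟨⟨m, hmM⟩, hm0⟩ : ∃ x : ↥M, x ≠ 0 := by
    rw [← rank_pos_iff_exists_ne_zero (R := R), h1]
    exact zero_lt_one
  have hm0' : m ≠ 0 := fun h => hm0 (Subtype.ext h)
  set c : Module.Free.ChooseBasisIndex R F → R := fun i => b.repr m i with hc
  obtain ⟨g, hg1, hg2⟩ := exists_gcd_list (R := R) ((Finset.univ : Finset (Module.Free.ChooseBasisIndex R F)).toList.map c)
  have hg1' : ∀ i, g ∣ c i := fun i => hg1 _ (List.mem_map.mpr ⟨i, Finset.mem_toList.mpr (Finset.mem_univ i), rfl⟩)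
  have hg2' : ∀ a t : R, (∀ i, a ∣ t * c i) → a ∣ t * g := by
    intro a t h
    refine hg2 a t fun y hy => ?_
    obtain ⟨i, -, rfl⟩ := List.mem_map.mp hy
    exact h i
  have hgne : g ≠ 0 := by
    rintro rfl
    apply hm0'
    have hz : ∀ i, c i = 0 := fun i => zero_dvd_iff.mp (hg1' i)
    have : b.repr m = 0 := Finsupp.ext fun i => hz i
    exact b.repr.map_eq_zero_iff.mp this
  choose e he using hg1'
  set p : F := ∑ i, e i • b i with hp
  have hrp : ∀ i, b.repr p i = e i := fun i => by
    rw [hp]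
    exact congrFun (b.repr_sum_self e) i
  have hgp : g • p = m := by
    have h2 : g • p = ∑ i, (g * e i) • b i := by
      rw [Finset.smul_sum]
      simp [smul_smul]
    rw [h2]
    simp_rw [← he]
    exact b.sum_repr m
  have hpM : p ∈ M := hsat' g p hgne (hgp.symm ▸ hmM)
  have hp0 : p ≠ 0 := by
    rintro h
    rw [h, smul_zero] at hgp
    exact hm0' hgp.symm
  have key : ∀ x ∈ M, ∃ s : R, x = s • p := by
    intro x hx
    have hni : ¬ LinearIndependent R ![(⟨x, hx⟩ : ↥M), ⟨p, hpM⟩] := by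
      intro hli
      have h2 := hli.cardinal_lift_le_rank
      rw [h1] at h2
      simp only [Cardinal.mk_fin, Nat.cast_ofNat, Cardinal.lift_ofNat, Cardinal.lift_one] at h2
      norm_num at h2
    rw [LinearIndependent.pair_iff] at hni
    push_neg at hni
    obtain ⟨s, t, hst, hst0⟩ := hni
    have hstF : s • x + t • p = 0 := by
      have := congrArg (Subtype.val) hst
      simpa using this
    by_cases hs : s = 0
    · exfalso
      subst hs
      rw [zero_smul, zero_add] at hstF
      rcases smul_eq_zero.mp hstF with h | h
      · exact hst0 rfl h
      · exact hp0 h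
    · have hsx : s • x = (-t) • p := by
        rw [neg_smul]
        exact eq_neg_of_add_eq_zero_left hstF
      have hcoord : ∀ i, s * (b.repr x i) = (-t) * e i := by
        intro i
        have h3 := congrArg (fun z => b.repr z i) hsx
        simpa [hrp i] using h3
      have hdvd : ∀ i, s * g ∣ (-t) * c i := by
        intro i
        rw [he i]
        have h4 : s ∣ (-t) * e i := ⟨b.repr x i, (hcoord i).symm⟩
        have h5 := mul_dvd_mul_right h4 g
        calc s * g ∣ (-t) * e i * g := h5
          _ = (-t) * (g * e i) := by ring
      have h6 : s * g ∣ (-t) * g := hg2' (s * g) (-t) hdvd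
      have h7 : s ∣ (-t) := by
        have := (mul_dvd_mul_iff_right hgne).mp h6
        exact this
      obtain ⟨u, hu⟩ := h7
      refine ⟨u, ?_⟩
      have h8 : s • x = s • (u • p) := by
        rw [hsx, hu, mul_smul]
      exact smul_right_injective F hs h8
  have hMspan : M = Submodule.span R {p} := by
    apply le_antisymm
    · intro x hx
      obtain ⟨s, hs⟩ := key x hx
      exact Submodule.mem_span_singleton.mpr ⟨s, hs.symm⟩
    · rwa [Submodule.span_singleton_le_iff_mem]
  rw [hMspan]
  exact Module.Free.of_equiv (LinearEquiv.toSpanNonzeroSingleton R F p hp0)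

/-- Local algebra formulation: let `R` be a Noetherian local factorial domain (UFD), `T` a
finite free `R`-module, and `W ≤ V` submodules of `T` such that `T/V` and `T/W` are
torsion-free, `W` and `T/W` are free, and `V/W` has rank one (i.e.
`finrank V = finrank W + 1`).  Then `V` is a free `R`-module. -/
theorem free_of_rank_one_extension
    (R : Type*) [CommRing R] [IsDomain R] [IsLocalRing R] [IsNoetherianRing R]
    [UniqueFactorizationMonoid R]
    (T : Type*) [AddCommGroup T] [Module R T] [Module.Free R T] [Module.Finite R T]
    (W V : Submodule R T) (hWV : W ≤ V)
    (hTV : NoZeroSMulDivisors R (T ⧸ V))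
    (hTW : NoZeroSMulDivisors R (T ⧸ W))
    (hWfree : Module.Free R W)
    (hTWfree : Module.Free R (T ⧸ W))
    (hrank : Module.finrank R V = Module.finrank R W + 1) :
    Module.Free R V := by
  haveI : IsNoetherian R T := isNoetherian_of_isNoetherianRing_of_finite R T
  haveI : Module.Finite R ↥V := Module.Finite.iff_fg.mpr (IsNoetherian.noetherian V)
  let π : ↥V →ₗ[R] T ⧸ W := W.mkQ.comp V.subtype
  have hker : LinearMap.ker π = W.comap V.subtype := by
    rw [LinearMap.ker_comp, Submodule.ker_mkQ]
  have hrange : LinearMap.range π = V.map W.mkQ := by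
    rw [LinearMap.range_comp, Submodule.range_subtype]
  let e1 : (↥V ⧸ LinearMap.ker π) ≃ₗ[R] ↥(V.map W.mkQ) :=
    π.quotKerEquivRange.trans (LinearEquiv.ofEq _ _ hrange)
  let e2 : ↥(LinearMap.ker π) ≃ₗ[R] ↥W :=
    (LinearEquiv.ofEq _ _ hker).trans (Submodule.comapSubtypeEquivOfLe hWV)
  -- finrank computation
  have hfr : finrank R (↥V ⧸ LinearMap.ker π) = 1 := by
    have h1 := (LinearMap.ker π).finrank_quotient_add_finrank
    have h2 : finrank R ↥(LinearMap.ker π) = finrank R ↥W := e2.finrank_eq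
    omega
  have hrankM : Module.rank R ↥(V.map W.mkQ) = 1 := by
    rw [← e1.rank_eq, ← Module.finrank_eq_rank, hfr, Nat.cast_one]
  -- saturation of the image
  have hsatM : NoZeroSMulDivisors R ((T ⧸ W) ⧸ V.map W.mkQ) := by
    let e := Submodule.quotientQuotientEquivQuotient W V hWV
    constructor
    intro r x hrx
    have h3 : r • e x = 0 := by rw [← map_smul, hrx, map_zero]
    rcases smul_eq_zero.mp h3 with h | h
    · exact Or.inl h
    · exact Or.inr (by simpa using e.map_eq_zero_iff.mp h)
  haveI hMfree : Module.Free R ↥(V.map W.mkQ) :=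
    free_of_rank_one_saturated (V.map W.mkQ) hsatM hrankM
  -- split the sequence 0 → ker π → V → V ⧸ ker π → 0
  haveI : Module.Free R (↥V ⧸ LinearMap.ker π) := Module.Free.of_equiv e1.symm
  obtain ⟨s, hs⟩ := Module.projective_lifting_property (LinearMap.ker π).mkQ LinearMap.id
    (Submodule.mkQ_surjective _)
  have hsid : ∀ q, (LinearMap.ker π).mkQ (s q) = q := fun q => LinearMap.congr_fun hs q
  have hsinj : Function.Injective s := by
    intro a b hab
    rw [← hsid a, ← hsid b, hab]
  have hproj : LinearMap.IsProj (LinearMap.range s) (s ∘ₗ (LinearMap.ker π).mkQ) := by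
    constructor
    · intro x; exact ⟨_, rfl⟩
    · rintro x ⟨q, rfl⟩
      show s ((LinearMap.ker π).mkQ (s q)) = s q
      rw [hsid]
  have hkk : LinearMap.ker (s ∘ₗ (LinearMap.ker π).mkQ) = LinearMap.ker π := by
    rw [LinearMap.ker_comp]
    have : LinearMap.ker s = ⊥ := LinearMap.ker_eq_bot.mpr hsinj
    rw [this, Submodule.comap_bot, Submodule.ker_mkQ]
  have hcompl : IsCompl (LinearMap.range s) (LinearMap.ker π) := by
    have h9 := hproj.isCompl
    rwa [hkk] at h9
  haveI : Module.Free R ↥(LinearMap.range s) :=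
    Module.Free.of_equiv (LinearEquiv.ofInjective s hsinj)
  haveI : Module.Free R ↥(LinearMap.ker π) := Module.Free.of_equiv e2.symm
  exact Module.Free.of_equiv (Submodule.prodEquivOfIsCompl _ _ hcompl)
end

section
/- Let R be a Noetherian local unique factorization domain and M a reflexive R-module of rank 1 (i.e. M ≅ M^∨∨ and M ⊗ Frac(R) has dimension 1). Then M is free of rank 1. -/
open TensorProduct

/-- In a 1-dimensional vector space, any two vectors are linearly dependent. -/
lemma two_vectors_dependent {K V : Type*} [Field K] [AddCommGroup V] [Module K V]
    (h : Module.finrank K V = 1) (u v : V) :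
    ∃ a b : K, (a ≠ 0 ∨ b ≠ 0) ∧ a • u = b • v := by
  by_cases hv : v = 0
  · exact ⟨0, 1, Or.inr one_ne_zero, by simp [hv]⟩
  · have hspan : Submodule.span K ({v} : Set V) = ⊤ :=
      (finrank_eq_one_iff_of_nonzero v hv).mp h
    have hu : u ∈ Submodule.span K ({v} : Set V) := hspan ▸ Submodule.mem_top
    obtain ⟨c, hc⟩ := Submodule.mem_span_singleton.mp hu
    exact ⟨1, c, Or.inl one_ne_zero, by simp [hc]⟩

/-- (Hartshorne, "Stable reflexive sheaves", Prop. 1.9, local form.)  A finitely generated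
reflexive module of rank one over a Noetherian local unique factorization domain is free of
rank one. -/
theorem reflexive_rank_one_is_free
    (R : Type*) [CommRing R] [IsDomain R] [IsLocalRing R] [IsNoetherianRing R]
    [UniqueFactorizationMonoid R]
    (M : Type*) [AddCommGroup M] [Module R M] [Module.Finite R M]
    [Module.IsReflexive R M]
    (hrank : Module.finrank (FractionRing R) (FractionRing R ⊗[R] M) = 1) :
    Module.Free R M ∧ Module.finrank R M = 1 := by
  classical
  letI : StrongNormalizationMonoid R := UniqueFactorizationMonoid.normalizationMonoid
  letI : StrongNormalizedGCDMonoid R := UniqueFactorizationMonoid.toStrongNormalizedGCDMonoid R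
  set K := FractionRing R
  have halg : Function.Injective (algebraMap R K) := IsFractionRing.injective R K
  -- nontriviality of M
  have hM : Nontrivial M := by
    by_contra h
    rw [not_nontrivial_iff_subsingleton] at h
    have : Subsingleton (K ⊗[R] M) := inferInstance
    rw [Module.finrank_zero_of_subsingleton] at hrank
    exact one_ne_zero hrank.symm
  -- extension of functionals to K ⊗ M
  let F : Module.Dual R M → (K ⊗[R] M →ₗ[K] K) :=
    fun f => ((Algebra.linearMap R K) ∘ₗ f).liftBaseChange K
  have hF : ∀ (f : Module.Dual R M) (x : M), F f (1 ⊗ₜ x) = algebraMap R K (f x) := by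
    intro f x
    simp [F]
  -- the key symmetry identity
  have symm : ∀ (f g : Module.Dual R M) (x y : M), f x * g y = f y * g x := by
    intro f g x y
    obtain ⟨a, b, hab, heq⟩ := two_vectors_dependent hrank
      ((1 : K) ⊗ₜ[R] x) ((1 : K) ⊗ₜ[R] y)
    apply halg
    rw [map_mul, map_mul, ← hF f, ← hF f, ← hF g, ← hF g]
    set A := F f (1 ⊗ₜ x); set B := F f (1 ⊗ₜ y)
    set C := F g (1 ⊗ₜ x); set D := F g (1 ⊗ₜ y)
    have h1 : a * A = b * B := by
      have := congrArg (F f) heq; simpa [A, B, smul_eq_mul] using this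
    have h2 : a * C = b * D := by
      have := congrArg (F g) heq; simpa [C, D, smul_eq_mul] using this
    have key : A * D = B * C := by
      rcases hab with ha | hb
      · apply mul_left_cancel₀ ha
        calc a * (A * D) = (a * A) * D := by ring
          _ = (b * B) * D := by rw [h1]
          _ = B * (b * D) := by ring
          _ = B * (a * C) := by rw [h2]
          _ = a * (B * C) := by ring
      · apply mul_left_cancel₀ hb
        calc b * (A * D) = A * (b * D) := by ring
          _ = A * (a * C) := by rw [h2]
          _ = (a * A) * C := by ring
          _ = (b * B) * C := by rw [h1]
          _ = b * (B * C) := by ring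
    exact key
  -- a nonzero functional exists
  obtain ⟨φ, hφ⟩ : ∃ φ : Module.Dual R M, φ ≠ 0 := by
    by_contra h
    push_neg at h
    have hsd : Subsingleton (Module.Dual R M) :=
      ⟨fun a b => by rw [h a, h b]⟩
    have hsdd : Subsingleton (Module.Dual R (Module.Dual R M)) :=
      ⟨fun a b => by
        ext f
        rw [Subsingleton.elim f (0 : Module.Dual R M), map_zero, map_zero]⟩
    have : Subsingleton M := (Module.evalEquiv R M).toEquiv.subsingleton
    exact (not_subsingleton M) this
  -- range of φ is a f.g. ideal; take d = gcd of generators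
  obtain ⟨S, hS⟩ : (LinearMap.range φ).FG := IsNoetherian.noetherian _
  set d := S.gcd id with hd_def
  have hd_dvd : ∀ g ∈ S, d ∣ g := fun g hg => Finset.gcd_dvd hg
  have hrange : ∀ x : M, d ∣ φ x := by
    intro x
    have hx : φ x ∈ Submodule.span R (S : Set R) := by
      rw [hS]; exact ⟨x, rfl⟩
    have hle : Submodule.span R (S : Set R) ≤ Submodule.span R {d} := by
      rw [Submodule.span_le]
      intro g hg
      rw [SetLike.mem_coe, Submodule.mem_span_singleton]
      obtain ⟨c, hc⟩ := hd_dvd g hg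
      exact ⟨c, by rw [smul_eq_mul, mul_comm, ← hc]⟩
    obtain ⟨c, hc⟩ := Submodule.mem_span_singleton.mp (hle hx)
    exact ⟨c, by rw [← hc, smul_eq_mul, mul_comm]⟩
  have hdne : d ≠ 0 := by
    intro h0
    apply hφ
    ext x
    have := hrange x
    rw [h0, zero_dvd_iff] at this
    simpa using this
  -- the map δ with d • δ = φ
  choose δ₀ hδ₀ using fun x => hrange x
  have hδ₀' : ∀ x : M, φ x = d * δ₀ x := hδ₀
  let δ : M →ₗ[R] R :=
    { toFun := δ₀
      map_add' := fun x y => by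
        apply mul_left_cancel₀ hdne
        rw [← hδ₀' (x + y), map_add, hδ₀' x, hδ₀' y, mul_add]
      map_smul' := fun r x => by
        apply mul_left_cancel₀ hdne
        simp only [RingHom.id_apply, smul_eq_mul]
        rw [← hδ₀' (r • x), map_smul, smul_eq_mul, hδ₀' x]; ring }
  have hδ : ∀ x : M, φ x = d * δ x := hδ₀'
  obtain ⟨x₀, hx₀⟩ : ∃ x, φ x ≠ 0 := by
    by_contra h
    push_neg at h
    exact hφ (LinearMap.ext fun x => h x)
  have hδx₀ : δ x₀ ≠ 0 := fun h => hx₀ (by rw [hδ x₀, h, mul_zero])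
  -- symmetry for δ
  have δsymm : ∀ (f : Module.Dual R M) (x y : M), δ x * f y = δ y * f x := by
    intro f x y
    apply mul_left_cancel₀ hdne
    calc d * (δ x * f y) = (d * δ x) * f y := by ring
      _ = φ x * f y := by rw [← hδ]
      _ = φ y * f x := symm φ f x y
      _ = (d * δ y) * f x := by rw [← hδ]
      _ = d * (δ y * f x) := by ring
  -- the "quotient by d" function on generators
  let E : R → R := fun g => if h : ∃ x, φ x = g then δ (Classical.choose h) else 0
  have hE : ∀ g ∈ S, d * E g = g := by
    intro g hg
    have hgr : g ∈ LinearMap.range φ := by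
      rw [← hS]; exact Submodule.subset_span hg
    obtain ⟨x, hx⟩ := hgr
    have hex : ∃ x, φ x = g := ⟨x, hx⟩
    simp only [E, dif_pos hex]
    rw [← hδ, Classical.choose_spec hex]
  have hδE : ∀ g ∈ S, ∀ x : M, φ x = g → δ x = E g := by
    intro g hg x hx
    apply mul_left_cancel₀ hdne
    rw [← hδ, hx, hE g hg]
  -- gcd of the E g is 1
  have hgE : S.gcd E = 1 := by
    have h1 : S.gcd (fun g => d * E g) = S.gcd id :=
      Finset.gcd_congr rfl (fun g hg => hE g hg)
    have h2 : S.gcd (fun g => d * E g) = normalize d * S.gcd E := Finset.gcd_mul_left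
    have h3 : normalize d * S.gcd E = d := by rw [← h2, h1, ← hd_def]
    have h4 : normalize d ≠ 0 := fun h => hdne (normalize_eq_zero.mp h)
    apply mul_left_cancel₀ h4
    rw [h3, mul_one]
    conv_lhs => rw [hd_def, ← Finset.normalize_gcd, ← hd_def]
  -- the equivalence R ≃ Dual R M, r ↦ r • δ
  let ψ : R →ₗ[R] Module.Dual R M := LinearMap.toSpanSingleton R _ δ
  have hψ : ∀ (r : R) (x : M), ψ r x = r * δ x := fun r x => rfl
  have hinj : Function.Injective ψ := by
    intro r s h
    have := congrArg (fun f : Module.Dual R M => f x₀) h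
    simp only [hψ] at this
    exact mul_right_cancel₀ hδx₀ this
  have hsurj : Function.Surjective ψ := by
    intro f
    set q := δ x₀ with hq
    set p := f x₀ with hp
    have hqy : ∀ y : M, q * f y = p * δ y := by
      intro y
      rw [hq, hp, δsymm f x₀ y, mul_comm]
    have hdvd : q ∣ p := by
      have h1 : q ∣ S.gcd (fun g => p * E g) := by
        apply Finset.dvd_gcd
        intro g hg
        have hgr : g ∈ LinearMap.range φ := by
          rw [← hS]; exact Submodule.subset_span hg
        obtain ⟨x, hx⟩ := hgr
        rw [← hδE g hg x hx, ← hqy x]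
        exact Dvd.intro _ rfl
      rw [Finset.gcd_mul_left, hgE, mul_one] at h1
      exact dvd_normalize_iff.mp h1
    obtain ⟨c, hc⟩ := hdvd
    refine ⟨c, ?_⟩
    ext y
    apply mul_left_cancel₀ hδx₀
    rw [hψ]
    calc q * (c * δ y) = (q * c) * δ y := by ring
      _ = p * δ y := by rw [← hc]
      _ = q * f y := (hqy y).symm
  let e₁ : R ≃ₗ[R] Module.Dual R M := LinearEquiv.ofBijective ψ ⟨hinj, hsurj⟩
  let eM : M ≃ₗ[R] R :=
    (Module.evalEquiv R M).trans (e₁.dualMap.trans (LinearMap.ringLmapEquivSelf R R R))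
  refine ⟨Module.Free.of_equiv eM.symm, ?_⟩
  rw [eM.finrank_eq, Module.finrank_self]
end

section
/- Let Φ be an irreducible reduced root system of type D_r (r ≥ 4) in a vector space V, and let s ∈ V* be a nonzero linear functional (equivalently a nonzero element of the Cartan subalgebra). Then the number of roots α ∈ Φ with α(s) ≠ 0 is at least 4r − 4. -/
/-- The root system of type `D_r`, realized concretely in `ℝ^r` as the vectors
`± e_i ± e_j` with `i < j`. -/
def DRoots (r : ℕ) : Set (Fin r → ℝ) :=
  {α | ∃ i j : Fin r, i < j ∧
    (α = Pi.single i 1 + Pi.single j 1 ∨ α = Pi.single i 1 - Pi.single j 1 ∨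
     α = -Pi.single i 1 + Pi.single j 1 ∨ α = -Pi.single i 1 - Pi.single j 1)}

namespace DrAux

noncomputable def sgn (b : Bool) : ℝ := if b then 1 else -1

lemma sgn_ne_zero (b : Bool) : sgn b ≠ 0 := by cases b <;> norm_num [sgn]

noncomputable def phi {r : ℕ} (q : Fin r × Fin r × Bool × Bool) : Fin r → ℝ :=
  sgn q.2.2.1 • (Pi.single q.1 1 : Fin r → ℝ) + sgn q.2.2.2 • (Pi.single q.2.1 1 : Fin r → ℝ)

lemma phi_apply {r : ℕ} (i j : Fin r) (b c : Bool) (k : Fin r) :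
    phi (i, j, b, c) k = (if k = i then sgn b else 0) + (if k = j then sgn c else 0) := by
  simp [phi, Pi.single_apply, mul_ite]

lemma phi_pair {r : ℕ} (i j : Fin r) (b c : Bool) (s : Fin r → ℝ) :
    ∑ k, phi (i, j, b, c) k * s k = sgn b * s i + sgn c * s j := by
  simp only [phi_apply, add_mul, ite_mul, zero_mul]
  rw [Finset.sum_add_distrib, Finset.sum_ite_eq' Finset.univ i, Finset.sum_ite_eq' Finset.univ j]
  simp [mul_comm]

lemma phi_tt {r : ℕ} (i j : Fin r) :
    phi (i, j, true, true) = Pi.single i 1 + Pi.single j 1 := by simp [phi, sgn]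

lemma phi_tf {r : ℕ} (i j : Fin r) :
    phi (i, j, true, false) = Pi.single i 1 - Pi.single j 1 := by
  simp [phi, sgn, sub_eq_add_neg]

lemma phi_ft {r : ℕ} (i j : Fin r) :
    phi (i, j, false, true) = -Pi.single i 1 + Pi.single j 1 := by simp [phi, sgn]

lemma phi_ff {r : ℕ} (i j : Fin r) :
    phi (i, j, false, false) = -Pi.single i 1 - Pi.single j 1 := by
  simp [phi, sgn, sub_eq_add_neg]

lemma T_eq {r : ℕ} (s : Fin r → ℝ) :
    {α ∈ DRoots r | (∑ i, α i * s i) ≠ 0} =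
      phi '' {q : Fin r × Fin r × Bool × Bool |
        q.1 < q.2.1 ∧ sgn q.2.2.1 * s q.1 + sgn q.2.2.2 * s q.2.1 ≠ 0} := by
  ext α
  constructor
  · rintro ⟨⟨i, j, hij, hcase⟩, hne⟩
    rcases hcase with h | h | h | h
    · exact ⟨(i, j, true, true), ⟨hij, by
        show sgn true * s i + sgn true * s j ≠ 0
        rw [← phi_pair, phi_tt, ← h]; exact hne⟩, (phi_tt i j).trans h.symm⟩
    · exact ⟨(i, j, true, false), ⟨hij, by
        show sgn true * s i + sgn false * s j ≠ 0
        rw [← phi_pair, phi_tf, ← h]; exact hne⟩, (phi_tf i j).trans h.symm⟩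
    · exact ⟨(i, j, false, true), ⟨hij, by
        show sgn false * s i + sgn true * s j ≠ 0
        rw [← phi_pair, phi_ft, ← h]; exact hne⟩, (phi_ft i j).trans h.symm⟩
    · exact ⟨(i, j, false, false), ⟨hij, by
        show sgn false * s i + sgn false * s j ≠ 0
        rw [← phi_pair, phi_ff, ← h]; exact hne⟩, (phi_ff i j).trans h.symm⟩
  · rintro ⟨⟨i, j, b, c⟩, ⟨hij, hne⟩, rfl⟩
    refine ⟨⟨i, j, hij, ?_⟩, by rw [phi_pair]; exact hne⟩
    cases b <;> cases c
    · exact Or.inr (Or.inr (Or.inr (phi_ff i j)))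
    · exact Or.inr (Or.inr (Or.inl (phi_ft i j)))
    · exact Or.inr (Or.inl (phi_tf i j))
    · exact Or.inl (phi_tt i j)

lemma phi_injOn {r : ℕ} :
    Set.InjOn phi {q : Fin r × Fin r × Bool × Bool | q.1 < q.2.1} := by
  rintro ⟨i₁, j₁, b₁, c₁⟩ h₁ ⟨i₂, j₂, b₂, c₂⟩ h₂ h
  simp only [Set.mem_setOf_eq] at h₁ h₂
  have e : ∀ k, (if k = i₁ then sgn b₁ else 0) + (if k = j₁ then sgn c₁ else 0) =
      (if k = i₂ then sgn b₂ else 0) + (if k = j₂ then sgn c₂ else 0) := fun k => by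
    rw [← phi_apply, ← phi_apply, h]
  have hi : i₁ = i₂ := by
    have h1 : i₁ = i₂ ∨ i₁ = j₂ := by
      by_contra hc
      push_neg at hc
      have e1 := e i₁
      rw [if_pos rfl, if_neg h₁.ne, if_neg hc.1, if_neg hc.2] at e1
      simpa using sgn_ne_zero b₁ (by linarith)
    rcases h1 with h1 | h1
    · exact h1
    · exfalso
      have h2 : i₂ = i₁ ∨ i₂ = j₁ := by
        by_contra hc
        push_neg at hc
        have e2 := e i₂
        rw [if_pos rfl, if_neg h₂.ne, if_neg hc.1, if_neg hc.2] at e2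
        simpa using sgn_ne_zero b₂ (by linarith)
      rcases h2 with h2 | h2
      · exact h₂.ne (h2.trans h1)
      · have a1 : i₂ < i₁ := by rw [h1]; exact h₂
        have a2 : i₁ < i₂ := by rw [h2]; exact h₁
        exact absurd (a1.trans a2) (lt_irrefl _)
  subst hi
  have hj : j₁ = j₂ := by
    by_contra hc
    have e1 := e j₁
    rw [if_neg h₁.ne', if_pos rfl, if_neg h₁.ne', if_neg hc] at e1
    simpa using sgn_ne_zero c₁ (by linarith)
  subst hj
  have eb := e i₁
  rw [if_pos rfl, if_pos rfl, if_neg h₁.ne, if_neg h₁.ne] at eb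
  have ec := e j₁
  rw [if_neg h₁.ne', if_neg h₁.ne', if_pos rfl, if_pos rfl] at ec
  have hb : b₁ = b₂ := by
    cases b₁ <;> cases b₂ <;> simp [sgn] at eb ⊢ <;> linarith
  have hcc : c₁ = c₂ := by
    cases c₁ <;> cases c₂ <;> simp [sgn] at ec ⊢ <;> linarith
  rw [hb, hcc]

lemma pairs_lt_card {r : ℕ} (S : Finset (Fin r)) :
    2 * ((S ×ˢ S).filter fun p => p.1 < p.2).card + S.card = S.card * S.card := by
  set L := (S ×ˢ S).filter fun p => p.1 < p.2 with hL
  set G := (S ×ˢ S).filter fun p => p.2 < p.1 with hG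
  have hcard : L.card = G.card := by
    apply Finset.card_bij (fun p _ => p.swap)
    · rintro ⟨a, b⟩ hp
      simp only [hL, hG, Finset.mem_filter, Finset.mem_product] at hp ⊢
      exact ⟨⟨hp.1.2, hp.1.1⟩, hp.2⟩
    · rintro ⟨a, b⟩ _ ⟨c, d⟩ _ h
      simpa [Prod.ext_iff, and_comm] using h
    · rintro ⟨a, b⟩ hp
      refine ⟨(b, a), ?_, rfl⟩
      simp only [hL, hG, Finset.mem_filter, Finset.mem_product] at hp ⊢
      exact ⟨⟨hp.1.2, hp.1.1⟩, hp.2⟩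
  have hunion : L ∪ G = S.offDiag := by
    ext p
    simp only [hL, hG, Finset.mem_union, Finset.mem_filter, Finset.mem_offDiag,
      Finset.mem_product]
    constructor
    · rintro (⟨⟨h1, h2⟩, h3⟩ | ⟨⟨h1, h2⟩, h3⟩)
      · exact ⟨h1, h2, h3.ne⟩
      · exact ⟨h1, h2, h3.ne'⟩
    · rintro ⟨h1, h2, h3⟩
      rcases lt_or_gt_of_ne h3 with h | h
      · exact Or.inl ⟨⟨h1, h2⟩, h⟩
      · exact Or.inr ⟨⟨h1, h2⟩, h⟩
  have hdisj : Disjoint L G := by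
    rw [Finset.disjoint_filter]
    intro p _ h1 h2
    exact absurd (h1.trans h2) (lt_irrefl _)
  have h1 : L.card + G.card = S.card * S.card - S.card := by
    rw [← Finset.card_union_of_disjoint hdisj, hunion, Finset.offDiag_card]
  have h2 : S.card ≤ S.card * S.card := by
    rcases Nat.eq_zero_or_pos S.card with h | h
    · simp [h]
    · exact Nat.le_mul_of_pos_left _ h
  omega

/-- the weight: number of sign choices giving nonzero pairing -/
noncomputable def wgt {r : ℕ} (s : Fin r → ℝ) (i j : Fin r) : ℕ :=
  ((Finset.univ : Finset (Bool × Bool)).filter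
    (fun bc => sgn bc.1 * s i + sgn bc.2 * s j ≠ 0)).card

noncomputable def rind {r : ℕ} (s : Fin r → ℝ) (i j : Fin r) : ℕ :=
  if s i = 0 then (if s j = 0 then 2 else 0) else (if s j = 0 then 0 else 1)

lemma boolcount_key {r : ℕ} (s : Fin r → ℝ) (i j : Fin r) :
    4 ≤ wgt s i j + 2 * rind s i j := by
  set a := s i
  set b := s j
  rw [wgt, rind, Finset.card_filter, Fintype.sum_prod_type]
  simp only [Fintype.sum_bool, sgn, if_true, if_false, one_mul, neg_one_mul]
  rcases eq_or_ne a 0 with ha | ha <;> rcases eq_or_ne b 0 with hb | hb <;>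
    simp only [ha, hb, if_true, if_false, if_pos, if_neg, ne_eq] <;>
    split_ifs <;> simp_all <;> try omega
  all_goals (exfalso; first | (apply ha; linarith) | (apply hb; linarith) | linarith)

lemma card_Q_eq {r : ℕ} (s : Fin r → ℝ) :
    (Finset.univ.filter (fun q : Fin r × Fin r × Bool × Bool =>
        q.1 < q.2.1 ∧ sgn q.2.2.1 * s q.1 + sgn q.2.2.2 * s q.2.1 ≠ 0)).card
      = ∑ p ∈ Finset.univ.filter (fun p : Fin r × Fin r => p.1 < p.2), wgt s p.1 p.2 := by
  rw [Finset.sum_filter, Finset.card_filter, Fintype.sum_prod_type, Fintype.sum_prod_type]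
  refine Finset.sum_congr rfl fun i _ => ?_
  rw [Fintype.sum_prod_type]
  refine Finset.sum_congr rfl fun j _ => ?_
  by_cases hij : i < j
  · rw [if_pos hij, wgt, Finset.card_filter]
    refine Finset.sum_congr rfl fun bc _ => ?_
    simp [hij]
  · simp [hij]

lemma sum_rind {r : ℕ} (s : Fin r → ℝ) :
    ∑ p ∈ Finset.univ.filter (fun p : Fin r × Fin r => p.1 < p.2), rind s p.1 p.2
      = 2 * ((((Finset.univ.filter (fun i : Fin r => s i = 0)) ×ˢ
              (Finset.univ.filter (fun i : Fin r => s i = 0))).filter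
                (fun p => p.1 < p.2)).card)
        + (((Finset.univ.filter (fun i : Fin r => s i ≠ 0)) ×ˢ
              (Finset.univ.filter (fun i : Fin r => s i ≠ 0))).filter
                (fun p => p.1 < p.2)).card := by
  set P := Finset.univ.filter (fun p : Fin r × Fin r => p.1 < p.2) with hP
  have step : ∀ p ∈ P, rind s p.1 p.2 =
      (if s p.1 = 0 ∧ s p.2 = 0 then 2 else 0) + (if s p.1 ≠ 0 ∧ s p.2 ≠ 0 then 1 else 0) := by
    intro p _
    rw [rind]
    split_ifs <;> simp_all
  rw [Finset.sum_congr rfl step, Finset.sum_add_distrib]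
  congr 1
  · rw [← Finset.sum_filter, Finset.sum_const, smul_eq_mul, mul_comm]
    congr 2
    ext p
    simp only [hP, Finset.mem_filter, Finset.mem_univ, true_and, Finset.mem_product]
    tauto
  · rw [← Finset.sum_filter, Finset.sum_const, smul_eq_mul, mul_one]
    congr 1
    ext p
    simp only [hP, Finset.mem_filter, Finset.mem_univ, true_and, Finset.mem_product, ne_eq]
    tauto

lemma arith (Qc Pc cZ cN z n r : ℕ) (hr : 4 ≤ r)
    (A : 4 * Pc ≤ Qc + 2 * (2 * cZ + cN))
    (B : 2 * Pc + r = r * r)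
    (C : 2 * cZ + z = z * z)
    (D : 2 * cN + n = n * n)
    (E : z + n = r) (F : 1 ≤ n) :
    4 * r - 4 ≤ Qc := by
  suffices h : 4 * r ≤ Qc + 4 by omega
  have A' : (4:ℤ) * Pc ≤ Qc + 2 * (2 * cZ + cN) := by exact_mod_cast A
  have B' : (2:ℤ) * Pc + r = r * r := by exact_mod_cast B
  have C' : (2:ℤ) * cZ + z = z * z := by exact_mod_cast C
  have D' : (2:ℤ) * cN + n = n * n := by exact_mod_cast D
  have E' : (z:ℤ) + n = r := by exact_mod_cast E
  have F' : (1:ℤ) ≤ n := by exact_mod_cast F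
  have G' : (4:ℤ) ≤ r := by exact_mod_cast hr
  have hz0 : (0:ℤ) ≤ z := Int.natCast_nonneg z
  have hmul : (0:ℤ) ≤ ((n:ℤ) - 1) * (4 * z + n - 4) := by
    apply mul_nonneg <;> omega
  have hE2 : ((r:ℤ)) * r = ((z:ℤ) + n) * ((z:ℤ) + n) := by rw [E']
  suffices h : (4:ℤ) * r ≤ (Qc:ℤ) + 4 by exact_mod_cast h
  nlinarith [hmul, A', B', C', D', E', hE2]

end DrAux

open DrAux in
/-- For the root system `Φ` of type `D_r` (`r ≥ 4`) and any nonzero linear functional `s`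
(identified with a nonzero vector of `ℝ^r` via the standard pairing), the number of roots
`α ∈ Φ` with `α(s) ≠ 0` is at least `4r - 4`. -/
theorem Dr_roots_not_orthogonal_card
    (r : ℕ) (hr : 4 ≤ r) (s : Fin r → ℝ) (hs : s ≠ 0) :
    4 * r - 4 ≤ {α ∈ DRoots r | (∑ i, α i * s i) ≠ 0}.ncard := by
  classical
  rw [T_eq s, Set.ncard_image_of_injOn (phi_injOn.mono (fun q hq => hq.1))]
  have hQ : {q : Fin r × Fin r × Bool × Bool |
        q.1 < q.2.1 ∧ sgn q.2.2.1 * s q.1 + sgn q.2.2.2 * s q.2.1 ≠ 0} =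
      ↑(Finset.univ.filter (fun q : Fin r × Fin r × Bool × Bool =>
        q.1 < q.2.1 ∧ sgn q.2.2.1 * s q.1 + sgn q.2.2.2 * s q.2.1 ≠ 0)) := by
    ext q
    simp [Set.mem_setOf_eq, Finset.mem_filter]
  rw [hQ, Set.ncard_coe_finset, card_Q_eq]
  set P := Finset.univ.filter (fun p : Fin r × Fin r => p.1 < p.2) with hPdef
  set Z := Finset.univ.filter (fun i : Fin r => s i = 0) with hZdef
  set NZ := Finset.univ.filter (fun i : Fin r => s i ≠ 0) with hNZdef
  set cZ := ((Z ×ˢ Z).filter (fun p => p.1 < p.2)).card with hcZ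
  set cN := ((NZ ×ˢ NZ).filter (fun p => p.1 < p.2)).card with hcN
  have hA : 4 * P.card ≤ (∑ p ∈ P, wgt s p.1 p.2) + 2 * (2 * cZ + cN) := by
    have h := Finset.sum_le_sum (fun p (_ : p ∈ P) => boolcount_key s p.1 p.2)
    rw [Finset.sum_const, smul_eq_mul, mul_comm, Finset.sum_add_distrib,
      ← Finset.mul_sum] at h
    rw [sum_rind] at h
    exact h
  have hB : 2 * P.card + r = r * r := by
    have h := pairs_lt_card (Finset.univ : Finset (Fin r))
    rw [Finset.univ_product_univ] at h
    simpa using h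
  have hC : 2 * cZ + Z.card = Z.card * Z.card := pairs_lt_card Z
  have hD : 2 * cN + NZ.card = NZ.card * NZ.card := pairs_lt_card NZ
  have hE : Z.card + NZ.card = r := by
    have h := Finset.card_filter_add_card_filter_not
      (s := (Finset.univ : Finset (Fin r))) (p := fun i => s i = 0)
    simpa using h
  have hF : 1 ≤ NZ.card := by
    obtain ⟨i, hi⟩ := Function.ne_iff.mp hs
    refine Finset.card_pos.mpr ⟨i, ?_⟩
    simp only [hNZdef, Finset.mem_filter, Finset.mem_univ, true_and]
    simpa using hi
  exact arith _ P.card cZ cN Z.card NZ.card r hr hA hB hC hD hE hF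
end
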